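/- Let x k : Fin n → ℝ, v : ℝ with v ≠ 0, b : Fin n → ℝ with ∑ j, b j = 0, and define y := ∑ j, (x j * k j * v + b j) and Con := ∑ j, x j * k j. With w := 1/v, if v > 0 then (0 : ℝ) * y + w * max y 0 = max Con 0, and if v < 0 then w * y + (-w) * max y 0 = max Con 0. Hence the full CHEETAH pipeline (zero-sum blinding, multiplicative blinding, polar-indicator recovery) computes the true ReLu of the convolution element. -/

import Mathlib

/-!
The zero-sum blinding `b` disappears from the sum, so `y = Con * v`. For `v > 0` the ReLU commutes
with scaling by `v`, and dividing by `v` recovers `max Con 0`. For `v < 0` scaling by `v` turns the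
ReLU into `min · 0`, so the recovered quantity is `Con - min Con 0 = max Con 0`.
-/

open Finset

theorem sum_mul_add_of_sum_eq_zero {ι R : Type*} [Fintype ι] [NonUnitalNonAssocSemiring R]
    {a b : ι → R} (v : R) (hb : ∑ j, b j = 0) :
    ∑ j, (a j * v + b j) = (∑ j, a j) * v := by
  rw [sum_add_distrib, hb, add_zero, sum_mul]

section ReluRecovery

variable {R : Type*} [Field R] [LinearOrder R] [IsStrictOrderedRing R] {v : R} (c : R)

theorem max_mul_zero_of_nonneg (hv : 0 ≤ v) : max (c * v) 0 = max c 0 * v := by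
  rw [max_mul_of_nonneg _ _ hv, zero_mul]

theorem max_mul_zero_of_nonpos (hv : v ≤ 0) : max (c * v) 0 = min c 0 * v := by
  rcases le_total c 0 with hc | hc
  · rw [max_eq_left (mul_nonneg_of_nonpos_of_nonpos hc hv), min_eq_left hc]
  · rw [max_eq_right (mul_nonpos_of_nonneg_of_nonpos hc hv), min_eq_right hc, zero_mul]

theorem one_div_mul_max_mul_zero_of_pos (hv : 0 < v) :
    1 / v * max (c * v) 0 = max c 0 := by
  rw [max_mul_zero_of_nonneg c hv.le]
  field_simp

theorem one_div_mul_add_neg_one_div_mul_max_mul_zero_of_neg (hv : v < 0) :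
    1 / v * (c * v) + -(1 / v) * max (c * v) 0 = max c 0 := by
  have hc : min c 0 + max c 0 = c := by rw [min_add_max, add_zero]
  rw [max_mul_zero_of_nonpos c hv.le]
  linear_combination (c - min c 0) * one_div_mul_cancel hv.ne - hc

end ReluRecovery

theorem stmt11_general (n : ℕ) (x k b : Fin n → ℝ) (v : ℝ)
    (hb : ∑ j, b j = 0) :
    let Con := ∑ j, x j * k j
    let y := ∑ j, (x j * k j * v + b j)
    let w := 1 / v
    (v > 0 → (0 : ℝ) * y + w * max y 0 = max Con 0) ∧
    (v < 0 → w * y + (-w) * max y 0 = max Con 0) := by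
  intro Con y w
  have hy : y = Con * v := sum_mul_add_of_sum_eq_zero v hb
  refine ⟨fun hv => ?_, fun hv => ?_⟩
  · rw [hy, zero_mul, zero_add]
    exact one_div_mul_max_mul_zero_of_pos Con hv
  · rw [hy]
    exact one_div_mul_add_neg_one_div_mul_max_mul_zero_of_neg Con hv

theorem stmt11 (n : ℕ) (x k b : Fin n → ℝ) (v : ℝ)
    (hv : v ≠ 0) (hb : ∑ j, b j = 0) :
    let Con := ∑ j, x j * k j
    let y := ∑ j, (x j * k j * v + b j)
    let w := 1 / v
    (v > 0 → (0 : ℝ) * y + w * max y 0 = max Con 0) ∧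
    (v < 0 → w * y + (-w) * max y 0 = max Con 0) :=
  stmt11_general n x k b v hb
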